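/- arXiv:1608.08190 — 3 statements merged into one kernel-verified Lean document; each statement's English description precedes it below -/
import Mathlib

section
/- The identity cosg(2x) = 2*cosg(x)^2 - 1 = 1 - 2*K*sing(x)^2 holds for all real x and all real K. -/
noncomputable def sing (K x : ℝ) : ℝ :=
  ∑' i : ℕ, (-K) ^ i * x ^ (2 * i + 1) / ((2 * i + 1).factorial : ℝ)

noncomputable def cosg (K x : ℝ) : ℝ :=
  ∑' i : ℕ, (-K) ^ i * x ^ (2 * i) / ((2 * i).factorial : ℝ)

lemma cosg_pos (K : ℝ) (hK : 0 < K) (x : ℝ) :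
    cosg K x = Real.cos (Real.sqrt K * x) := by
  rw [Real.cos_eq_tsum, cosg]
  refine tsum_congr fun i => ?_
  rw [mul_pow, neg_pow, pow_mul (Real.sqrt K), Real.sq_sqrt hK.le]
  ring

lemma sing_pos (K : ℝ) (hK : 0 < K) (x : ℝ) :
    sing K x = Real.sin (Real.sqrt K * x) / Real.sqrt K := by
  have hs : (0:ℝ) < Real.sqrt K := Real.sqrt_pos.2 hK
  rw [Real.sin_eq_tsum, sing, ← tsum_div_const]
  refine tsum_congr fun i => ?_
  rw [neg_pow, mul_pow, pow_succ (Real.sqrt K), pow_mul (Real.sqrt K),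
    Real.sq_sqrt hK.le]
  field_simp

lemma cosg_neg' (K : ℝ) (hK : K < 0) (x : ℝ) :
    cosg K x = Real.cosh (Real.sqrt (-K) * x) := by
  rw [Real.cosh_eq_tsum, cosg]
  refine tsum_congr fun i => ?_
  rw [mul_pow, pow_mul (Real.sqrt (-K)), Real.sq_sqrt (by linarith : (0:ℝ) ≤ -K)]

lemma sing_neg' (K : ℝ) (hK : K < 0) (x : ℝ) :
    sing K x = Real.sinh (Real.sqrt (-K) * x) / Real.sqrt (-K) := by
  have hs : (0:ℝ) < Real.sqrt (-K) := Real.sqrt_pos.2 (by linarith)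
  rw [Real.sinh_eq_tsum, sing, ← tsum_div_const]
  refine tsum_congr fun i => ?_
  rw [mul_pow, pow_succ (Real.sqrt (-K)), pow_mul (Real.sqrt (-K)),
    Real.sq_sqrt (by linarith : (0:ℝ) ≤ -K)]
  field_simp

lemma cosg_zero' (x : ℝ) : cosg 0 x = 1 := by
  rw [cosg, tsum_eq_single 0 (by intro i hi; simp [zero_pow hi])]
  simp

theorem cosg_two_mul (K x : ℝ) :
    cosg K (2 * x) = 2 * cosg K x ^ 2 - 1 ∧
    cosg K (2 * x) = 1 - 2 * K * sing K x ^ 2 := by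
  rcases lt_trichotomy K 0 with hK | hK | hK
  · have hs : (0:ℝ) < Real.sqrt (-K) := Real.sqrt_pos.2 (by linarith)
    have hK' : Real.sqrt (-K) ^ 2 = -K := Real.sq_sqrt (by linarith)
    rw [cosg_neg' K hK, cosg_neg' K hK, sing_neg' K hK]
    have h2 : Real.sqrt (-K) * (2 * x) = 2 * (Real.sqrt (-K) * x) := by ring
    constructor
    · rw [h2, Real.cosh_two_mul, Real.cosh_sq]; ring
    · rw [h2, Real.cosh_two_mul, Real.cosh_sq, div_pow]
      field_simp
      nlinarith [hK', Real.sinh_sq (Real.sqrt (-K) * x)]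
  · subst hK
    simp [cosg_zero']
    norm_num
  · have hK' : Real.sqrt K ^ 2 = K := Real.sq_sqrt hK.le
    have hs : (0:ℝ) < Real.sqrt K := Real.sqrt_pos.2 hK
    rw [cosg_pos K hK, cosg_pos K hK, sing_pos K hK]
    have h2 : Real.sqrt K * (2 * x) = 2 * (Real.sqrt K * x) := by ring
    constructor
    · rw [h2, Real.cos_two_mul]
    · rw [h2, Real.cos_two_mul, div_pow]
      field_simp
      nlinarith [hK', Real.sin_sq_add_cos_sq (Real.sqrt K * x)]
end

section
/- The addition formula cosg(x + y) = cosg(x)*cosg(y) - K*sing(x)*sing(y) holds for all real x, y, and all real K. -/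
lemma cosg_eq_complex (K : ℝ) (c : ℂ) (hc : c ^ 2 = (K : ℂ)) (x : ℝ) :
    (cosg K x : ℂ) = Complex.cos (c * x) := by
  rw [Complex.cos_eq_tsum, cosg, Complex.ofReal_tsum]
  congr 1
  ext n
  push_cast
  rw [mul_pow, pow_mul, pow_mul, hc, ← mul_assoc, ← mul_pow]
  ring

lemma sing_eq_complex (K : ℝ) (c : ℂ) (hc : c ^ 2 = (K : ℝ)) (x : ℝ) :
    c * (sing K x : ℂ) = Complex.sin (c * x) := by
  rw [Complex.sin_eq_tsum, sing, Complex.ofReal_tsum, ← tsum_mul_left]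
  congr 1
  ext n
  push_cast
  have h1 : (-(K:ℂ))^n = (-1)^n * c^(2*n) := by
    rw [pow_mul, hc, ← mul_pow, neg_one_mul]
  rw [h1, pow_succ]
  ring

theorem cosg_add (K x y : ℝ) :
    cosg K (x + y) = cosg K x * cosg K y - K * sing K x * sing K y := by
  obtain ⟨c, hc⟩ := IsAlgClosed.exists_pow_nat_eq (K : ℂ) zero_lt_two
  have h := Complex.cos_add (c * x) (c * y)
  rw [← mul_add, ← Complex.ofReal_add, ← cosg_eq_complex K c hc,
    ← cosg_eq_complex K c hc, ← cosg_eq_complex K c hc,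
    ← sing_eq_complex K c hc, ← sing_eq_complex K c hc] at h
  have h2 : (cosg K (x + y) : ℂ) =
      ((cosg K x * cosg K y - K * sing K x * sing K y : ℝ) : ℂ) := by
    rw [h]; push_cast; rw [← hc]; ring
  exact_mod_cast h2
end

section
/- The half-angle identity 2*cosg(x/2)^2 = 1 + cosg(x) holds for all real x and all real K. -/
lemma cosg_eq_cos (K x : ℝ) (hK : 0 ≤ K) :
    cosg K x = Real.cos (Real.sqrt K * x) := by
  rw [Real.cos_eq_tsum, cosg]
  congr 1; ext n
  rw [mul_pow, pow_mul, pow_mul, Real.sq_sqrt hK, ← mul_assoc, ← mul_pow, ← mul_pow]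
  ring_nf

lemma cosg_eq_cosh (K x : ℝ) (hK : K ≤ 0) :
    cosg K x = Real.cosh (Real.sqrt (-K) * x) := by
  rw [Real.cosh_eq_tsum, cosg]
  congr 1; ext n
  rw [mul_pow, pow_mul, pow_mul, Real.sq_sqrt (by linarith), ← mul_pow]

theorem cosg_half_sq (K x : ℝ) :
    2 * cosg K (x / 2) ^ 2 = 1 + cosg K x := by
  rcases le_or_gt 0 K with hK | hK
  · rw [cosg_eq_cos K _ hK, cosg_eq_cos K _ hK]
    have h : Real.sqrt K * x = 2 * (Real.sqrt K * (x / 2)) := by ring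
    rw [h, Real.cos_two_mul]; ring
  · rw [cosg_eq_cosh K _ hK.le, cosg_eq_cosh K _ hK.le]
    have h : Real.sqrt (-K) * x = 2 * (Real.sqrt (-K) * (x / 2)) := by ring
    rw [h, Real.cosh_two_mul, Real.sinh_sq]; ring
end
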